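/- arXiv:1712.08712 — 4 statements merged into one kernel-verified Lean document; each statement's English description precedes it below -/
import Mathlib

section
/- Let G_t and G_{t+1} be finite trees with G_t a subtree of G_{t+1}, such that every vertex of G_{t+1} not in G_t is adjacent to a vertex of G_t (one growth step). If the eccentricity of the Jordan center of G_{t+1} is strictly less than the eccentricity in G_{t+1} of the Jordan center of G_t, then the Jordan center of G_{t+1} is a neighbor of the Jordan center of G_t. -/
/-!
Write `ecc` for eccentricity in the whole tree and `ecc_S` for eccentricity measured over `S`.
Let `u` be the neighbour of `vt` on the path towards `vt1`, and suppose `u ≠ vt1`. Adding one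
layer of leaves raises every eccentricity by at most one, so `ecc vt ≤ ecc_S vt + 1`. A vertex
`z ∈ S` on the far side of `vt` from `u` is at distance at least `d(vt, z) + 2` from `vt1`, hence
`d(vt, z) + 2 ≤ ecc vt1 < ecc vt ≤ ecc_S vt + 1`; a vertex on `u`'s side is closer to `u` than to
`vt`. Either way `d(u, z) < ecc_S vt`, and `u ∈ S` by path-convexity, contradicting the choice
of `vt` as a Jordan center of `S`.
-/

open Finset

namespace SimpleGraph

variable {V : Type*} {G : SimpleGraph V}

lemma Walk.dist_add_dist_of_mem_support {u v w : V} {p : G.Walk u v}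
    (hp : p.length = G.dist u v) (hw : w ∈ p.support) :
    G.dist u w + G.dist w v = G.dist u v := by
  classical
  have htake := dist_le (p.takeUntil w hw)
  have hdrop := dist_le (p.dropUntil w hw)
  have hsplit : (p.takeUntil w hw).length + (p.dropUntil w hw).length = p.length := by
    rw [← Walk.length_append, p.take_spec hw]
  have := (p.dropUntil w hw).reachable.dist_triangle_right u
  omega

lemma Connected.exists_adj_dist_add_one_eq (hG : G.Connected) {u v : V} (huv : u ≠ v) :
    ∃ w, G.Adj u w ∧ G.dist w v + 1 = G.dist u v := by
  obtain ⟨p, hlen⟩ := hG.exists_walk_length_eq_dist u v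
  have hnil : ¬ p.Nil := Walk.not_nil_of_ne huv
  refine ⟨p.snd, p.adj_snd hnil, ?_⟩
  have : G.dist u p.snd + G.dist p.snd v = G.dist u v :=
    Walk.dist_add_dist_of_mem_support hlen (p.getVert_mem_support 1)
  rw [dist_eq_one_iff_adj.2 (p.adj_snd hnil)] at this
  omega

lemma IsTree.length_eq_dist_of_isPath (hG : G.IsTree) {u v : V} {p : G.Walk u v}
    (hp : p.IsPath) : p.length = G.dist u v := by
  obtain ⟨q, hq, hlen⟩ := hG.connected.exists_path_of_dist u v
  rwa [Subtype.mk.inj ((hG.isAcyclic.subsingleton_path u v).elim ⟨p, hp⟩ ⟨q, hq⟩)]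

lemma IsTree.dist_add_one_eq_or (hG : G.IsTree) {a b : V} (hab : G.Adj a b) (x : V) :
    G.dist b x + 1 = G.dist a x ∨ G.dist a x + 1 = G.dist b x := by
  have := hG.dist_eq_dist_add_one_of_adj x hab
  rw [dist_comm (u := x), dist_comm (u := x)] at this
  omega

lemma IsTree.dist_eq_dist_add_one_add_dist (hG : G.IsTree) {a b x y : V} (hab : G.Adj a b)
    (hx : G.dist b x + 1 = G.dist a x) (hy : G.dist a y + 1 = G.dist b y) :
    G.dist x y = G.dist x b + 1 + G.dist a y := by
  obtain ⟨p, hp, hplen⟩ := hG.connected.exists_path_of_dist x b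
  obtain ⟨q, hq, hqlen⟩ := hG.connected.exists_path_of_dist a y
  -- a vertex common to `p` and `q` would be closer to `b` than to `a` and vice versa
  have hdisj : ∀ w ∈ p.support, w ∉ q.support := by
    intro w hwp hwq
    have h1 := Walk.dist_add_dist_of_mem_support hplen hwp
    have h2 := Walk.dist_add_dist_of_mem_support hqlen hwq
    have h3 := hG.connected.dist_triangle (u := a) (v := w) (w := x)
    have h4 := hG.connected.dist_triangle (u := b) (v := w) (w := y)
    have := G.dist_comm (u := a) (v := w)
    have := G.dist_comm (u := b) (v := w)
    have := G.dist_comm (u := b) (v := x)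
    have := G.dist_comm (u := w) (v := x)
    omega
  have hpath : (p.append (Walk.cons hab.symm q)).IsPath := by
    rw [Walk.isPath_def, Walk.support_append, Walk.support_cons, List.tail_cons,
      List.nodup_append]
    exact ⟨hp.support_nodup, hq.support_nodup, fun w hwp w' hwq h => hdisj w hwp (h ▸ hwq)⟩
  rw [← hG.length_eq_dist_of_isPath hpath, Walk.length_append, Walk.length_cons, hplen, hqlen]
  omega

lemma IsTree.dist_add_two_le_dist (hG : G.IsTree) {a b c x : V} (hab : G.Adj a b) (hbc : b ≠ c)
    (hc : G.dist b c + 1 = G.dist a c) (hx : G.dist a x + 1 = G.dist b x) :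
    G.dist a x + 2 ≤ G.dist c x := by
  have hcut := hG.dist_eq_dist_add_one_add_dist hab hc hx
  have := hG.connected.pos_dist_of_ne hbc.symm
  omega

lemma IsTree.mem_of_adj_toward (hG : G.IsTree) {S : Finset V}
    (hS : ∀ u v w, u ∈ S → w ∈ S → G.dist u v + G.dist v w = G.dist u w → v ∈ S)
    (hdom : ∀ x ∉ S, ∃ y ∈ S, G.Adj x y) {a b c : V} (ha : a ∈ S) (hab : G.Adj a b)
    (hbc : b ≠ c) (hc : G.dist b c + 1 = G.dist a c) : b ∈ S := by
  have : G.dist a b = 1 := dist_eq_one_iff_adj.2 hab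
  by_cases hcS : c ∈ S
  · exact hS a b c ha hcS (by omega)
  obtain ⟨y, hyS, hcy⟩ := hdom c hcS
  have : G.dist c y = 1 := dist_eq_one_iff_adj.2 hcy
  rcases hG.dist_add_one_eq_or hab y with hyb | hya
  · exact hS a b y ha hyS (by omega)
  · have := hG.dist_add_two_le_dist hab hbc hc hya
    omega

lemma sup_univ_dist_le_sup_dist_add_one [Fintype V] {S : Finset V}
    (hS : ∀ x ∉ S, ∃ y ∈ S, G.Adj x y) (v : V) :
    univ.sup (G.dist v) ≤ S.sup (G.dist v) + 1 := by
  refine Finset.sup_le fun x _ => ?_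
  by_cases hx : x ∈ S
  · exact (le_sup hx).trans (Nat.le_succ _)
  · obtain ⟨y, hy, hxy⟩ := hS x hx
    calc G.dist v x ≤ G.dist v y + G.dist y x := hxy.symm.reachable.dist_triangle_right v
      _ ≤ S.sup (G.dist v) + 1 := by
        rw [dist_eq_one_iff_adj.2 hxy.symm]
        exact Nat.add_le_add_right (le_sup hy) 1

end SimpleGraph

open SimpleGraph

theorem stmt4_general {V : Type*} [Fintype V] (T : SimpleGraph V) (hT : T.IsTree)
    (S : Finset V)
    (hconv : ∀ u v w : V, u ∈ S → w ∈ S → T.dist u v + T.dist v w = T.dist u w → v ∈ S)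
    (hnew : ∀ x : V, x ∉ S → ∃ y ∈ S, T.Adj x y)
    (vt vt1 : V) (hvt : vt ∈ S)
    (hvt_min : ∀ w ∈ S, S.sup (fun z => T.dist vt z) ≤ S.sup (fun z => T.dist w z))
    (hmove : Finset.univ.sup (fun z => T.dist vt1 z) <
      Finset.univ.sup (fun z => T.dist vt z)) :
    T.Adj vt vt1 := by
  eta_reduce at hvt_min hmove
  have hne : vt ≠ vt1 := by rintro rfl; exact lt_irrefl _ hmove
  obtain ⟨u, hvtu, hu⟩ := hT.connected.exists_adj_dist_add_one_eq hne
  by_contra hnadj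
  have huv : u ≠ vt1 := fun h => hnadj (h ▸ hvtu)
  have huS : u ∈ S := hT.mem_of_adj_toward hconv hnew hvt hvtu huv hu
  have hecc := sup_univ_dist_le_sup_dist_add_one hnew vt
  have hclose : ∀ z ∈ S, T.dist u z < S.sup (T.dist vt) := by
    intro z hz
    have : T.dist vt z ≤ S.sup (T.dist vt) := le_sup hz
    rcases hT.dist_add_one_eq_or hvtu z with hzu | hzvt
    · omega
    · have := hT.dist_add_two_le_dist hvtu huv hu hzvt
      have : T.dist vt1 z ≤ univ.sup (T.dist vt1) := le_sup (mem_univ z)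
      omega
  have hlt : S.sup (T.dist u) < S.sup (T.dist vt) :=
    (Finset.sup_lt_iff ((Nat.zero_le _).trans_lt (hclose vt hvt))).2 hclose
  exact (hvt_min u huS).not_gt hlt

/-- One growth step: `T` is the finite tree `G_{t+1}`, and `S` is the vertex set of the subtree
`G_t` (nonempty, path-closed), with every vertex outside `S` adjacent to a vertex of `S`.
If `vt` is a Jordan center of `G_t` (minimizing `S.sup (T.dist ·)` over `S`), `vt1` is a Jordan
center of `G_{t+1}` (minimizing eccentricity over all vertices), and the eccentricity of `vt1`
in `G_{t+1}` is strictly smaller than that of `vt` in `G_{t+1}`, then `vt1` is a neighbor of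
`vt`. -/
theorem stmt4 {V : Type*} [Fintype V] (T : SimpleGraph V) (hT : T.IsTree)
    (S : Finset V) (hS : S.Nonempty)
    (hconv : ∀ u v w : V, u ∈ S → w ∈ S → T.dist u v + T.dist v w = T.dist u w → v ∈ S)
    (hnew : ∀ x : V, x ∉ S → ∃ y ∈ S, T.Adj x y)
    (vt vt1 : V) (hvt : vt ∈ S)
    (hvt_min : ∀ w ∈ S, S.sup (fun z => T.dist vt z) ≤ S.sup (fun z => T.dist w z))
    (hvt1_min : ∀ w : V, Finset.univ.sup (fun z => T.dist vt1 z) ≤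
      Finset.univ.sup (fun z => T.dist w z))
    (hmove : Finset.univ.sup (fun z => T.dist vt1 z) <
      Finset.univ.sup (fun z => T.dist vt z)) :
    T.Adj vt vt1 :=
  stmt4_general T hT S hconv hnew vt vt1 hvt hvt_min hmove
end

section
/- Let G_t ⊆ G_{t+1} be finite trees where each vertex of G_{t+1} not in G_t is adjacent to a vertex of G_t. If the minimum eccentricity of G_{t+1} is strictly less than the eccentricity in G_{t+1} of any Jordan center of G_t (the center 'moves'), then the minimum eccentricity of G_{t+1} equals the minimum eccentricity of G_t. -/
/-!
A Jordan center `c` of `G_t` has eccentricity at most `e + 1` in `G_{t+1}`, where `e` is its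
eccentricity in `G_t`, since every new vertex hangs off an old one; as the center moves, the
minimum eccentricity of `G_{t+1}` is at most `e`. Conversely, if a Jordan center `v` of `G_{t+1}`
is new, its old neighbour `y` is no farther than `v` from any old vertex `z`: otherwise `v` would
lie on a geodesic from `y` to `z` and hence, `G_t` being geodesically convex, be old. So `y` has
eccentricity in `G_t` at most that of `v`.
-/

open SimpleGraph Finset

namespace SimpleGraph

variable {V : Type*} {G : SimpleGraph V} {S : Finset V}

lemma Connected.dist_le_of_adj_of_notMem (hG : G.Connected)
    (hconv : ∀ u v w : V, u ∈ S → w ∈ S → G.dist u v + G.dist v w = G.dist u w → v ∈ S)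
    {v y z : V} (hv : v ∉ S) (hy : y ∈ S) (hz : z ∈ S) (hadj : G.Adj v y) :
    G.dist y z ≤ G.dist v z := by
  by_contra! hlt
  have hyv : G.dist y v = 1 := dist_eq_one_iff_adj.mpr hadj.symm
  have htri : G.dist y z ≤ G.dist y v + G.dist v z := hG.dist_triangle
  exact hv (hconv y v z hy hz (by omega))

lemma Connected.sup_dist_le_sup_dist_add_one [Fintype V] (hG : G.Connected)
    (hnew : ∀ x : V, x ∉ S → ∃ y ∈ S, G.Adj x y) (c : V) :
    univ.sup (fun z => G.dist c z) ≤ S.sup (fun z => G.dist c z) + 1 := by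
  refine Finset.sup_le fun z _ => ?_
  by_cases hz : z ∈ S
  · exact (le_sup (f := fun z => G.dist c z) hz).trans (Nat.le_succ _)
  · obtain ⟨y, hy, hadj⟩ := hnew z hz
    calc G.dist c z ≤ G.dist c y + G.dist y z := hG.dist_triangle
      _ = G.dist c y + 1 := by rw [dist_eq_one_iff_adj.mpr hadj.symm]
      _ ≤ S.sup (fun z => G.dist c z) + 1 := by gcongr; exact le_sup (f := fun z => G.dist c z) hy

lemma Connected.exists_mem_sup_dist_le [Fintype V] (hG : G.Connected)
    (hconv : ∀ u v w : V, u ∈ S → w ∈ S → G.dist u v + G.dist v w = G.dist u w → v ∈ S)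
    (hnew : ∀ x : V, x ∉ S → ∃ y ∈ S, G.Adj x y) (v : V) :
    ∃ y ∈ S, S.sup (fun z => G.dist y z) ≤ univ.sup (fun z => G.dist v z) := by
  by_cases hv : v ∈ S
  · exact ⟨v, hv, sup_mono (subset_univ S)⟩
  · obtain ⟨y, hy, hadj⟩ := hnew v hv
    refine ⟨y, hy, Finset.sup_le fun z hz => ?_⟩
    exact (hG.dist_le_of_adj_of_notMem hconv hv hy hz hadj).trans
      (le_sup (f := fun z => G.dist v z) (mem_univ z))

end SimpleGraph

/-- One growth step: `T` is the finite tree `G_{t+1}`, `S` the vertex set of the subtree `G_t`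
(nonempty, path-closed), every new vertex adjacent to an old one.  If the minimum eccentricity
of `G_{t+1}` is strictly smaller than the eccentricity in `G_{t+1}` of every Jordan center of
`G_t` (the center moves), then the minimum eccentricity of `G_{t+1}` equals the minimum
eccentricity of `G_t`. -/
theorem stmt6 {V : Type*} [Fintype V] [Nonempty V] (T : SimpleGraph V) (hT : T.IsTree)
    (S : Finset V) (hS : S.Nonempty)
    (hconv : ∀ u v w : V, u ∈ S → w ∈ S → T.dist u v + T.dist v w = T.dist u w → v ∈ S)
    (hnew : ∀ x : V, x ∉ S → ∃ y ∈ S, T.Adj x y)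
    (hmove : ∀ c ∈ S, (∀ w ∈ S, S.sup (fun z => T.dist c z) ≤ S.sup (fun z => T.dist w z)) →
      Finset.univ.inf' Finset.univ_nonempty (fun v => Finset.univ.sup (fun z => T.dist v z)) <
        Finset.univ.sup (fun z => T.dist c z)) :
    Finset.univ.inf' Finset.univ_nonempty (fun v => Finset.univ.sup (fun z => T.dist v z)) =
      S.inf' hS (fun v => S.sup (fun z => T.dist v z)) := by
  have hG := hT.connected
  apply le_antisymm
  · obtain ⟨c, hcS, hc⟩ := exists_mem_eq_inf' hS (fun v => S.sup (fun z => T.dist v z))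
    have hcenter : ∀ w ∈ S, S.sup (fun z => T.dist c z) ≤ S.sup (fun z => T.dist w z) :=
      fun w hw => hc ▸ inf'_le _ hw
    have hlt := hmove c hcS hcenter
    have hecc := hG.sup_dist_le_sup_dist_add_one hnew c
    omega
  · obtain ⟨v, -, hv⟩ :=
      exists_mem_eq_inf' univ_nonempty (fun v => univ.sup (fun z => T.dist v z))
    obtain ⟨y, hy, hle⟩ := hG.exists_mem_sup_dist_le hconv hnew v
    rw [hv]
    exact (inf'_le _ hy).trans hle
end

section
/- In the IC-type deterministic growth model (new vertices only attach to vertices added at the previous step), if the Jordan center moves from step t to step t+1, then all subtrees of G_t rooted at neighbors of the Jordan center v*_t, except the unique deepest one, are dead at step t, i.e., they receive no new vertices at step t+1 (and hence at any later step). -/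
/-!
Say `x` lies in the `w`-branch of `v` when `T.dist v x = T.dist w x + 1`. Let `e` be the
eccentricity of `v` in `G_t`. Because the `u₁`-branch is the unique deepest one and `v` is a
center, `G_t` has a vertex `z₁` at distance `e` from `v` inside the `u₁`-branch and a vertex `z₂`
at distance `e - 1` outside it. New vertices hang off old ones, so eccentricities grow by at most
one from `G_t` to `G_{t+1}`; a vertex beating `v` in `G_{t+1}` then has eccentricity at most `e`,
and `z₁`, `z₂` force it to be `u₁`. Hence `G_{t+1}` has a new vertex at distance `e + 1` from `v`
in the `u₁`-branch. Since `G_{s+1} \ G_s` is exactly at distance `s + 1` from the root, either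
`z₂` or that new vertex shows `d(root, v) + e ≤ t + 1`, so a new vertex outside the `u₁`-branch,
being within `e - 1` of `v`, would be at distance at most `t` from the root. Finally, a branch
that receives nothing at one step receives nothing later, since every later vertex attaches to a
vertex added at the step before, which lies in the same branch.
-/

noncomputable def subDepthIn {V : Type*} (T : SimpleGraph V) (A : Finset V)
    (v w : V) : ℕ :=
  (A.filter (fun x => T.dist v x = T.dist w x + 1)).sup (fun x => T.dist v x)

open Finset

namespace SimpleGraph

variable {V : Type*} {G : SimpleGraph V} {a b v w w' x y z : V}

lemma Walk.dist_add_dist_of_mem_support_s9 (p : G.Walk a b) (hp : p.length = G.dist a b)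
    (hz : z ∈ p.support) : G.dist a z + G.dist z b = G.dist a b := by
  classical
  have hsplit := congrArg Walk.length (p.take_spec hz)
  rw [Walk.length_append] at hsplit
  have := dist_le (p.takeUntil z hz)
  have := dist_le (p.dropUntil z hz)
  have := (p.takeUntil z hz).reachable.dist_triangle_left b
  omega

lemma Connected.exists_adj_dist_eq_add_one (hG : G.Connected) (hxy : x ≠ y) :
    ∃ w, G.Adj x w ∧ G.dist x y = G.dist w y + 1 := by
  obtain ⟨p, hp⟩ := hG.exists_walk_length_eq_dist x y
  cases p with
  | nil => exact absurd rfl hxy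
  | @cons _ w _ hxw q =>
    have := dist_le q
    have : G.dist x y ≤ G.dist x w + G.dist w y := hG.dist_triangle
    rw [dist_eq_one_iff_adj.mpr hxw] at this
    rw [Walk.length_cons] at hp
    exact ⟨w, hxw, by omega⟩

/-- A walk from the `w`-side to the `v`-side of a bridge crosses it, hence passes through `v`. -/
lemma IsBridge.dist_eq_dist_add_dist (hG : G.Connected) (hb : G.IsBridge s(v, w))
    (hx : G.dist v x = G.dist w x + 1) (hy : G.dist w y = G.dist v y + 1) :
    G.dist x y = G.dist v x + G.dist v y := by
  obtain ⟨r, hr⟩ := hG.exists_walk_length_eq_dist w x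
  obtain ⟨p, hp⟩ := hG.exists_walk_length_eq_dist x y
  obtain ⟨q, hq⟩ := hG.exists_walk_length_eq_dist y v
  have hvr : v ∉ r.support := fun h => by
    have := r.dist_add_dist_of_mem_support_s9 hr h
    omega
  have hwq : w ∉ q.support := fun h => by
    have := q.dist_add_dist_of_mem_support_s9 hq h
    rw [dist_comm (u := y), dist_comm (u := y)] at this
    omega
  have hcross := isBridge_iff_forall_walk_mem_edges.mp hb (r.append (p.append q)).reverse
  simp only [Walk.edges_reverse, List.mem_reverse, Walk.edges_append, List.mem_append] at hcross
  obtain hr' | hp' | hq' := hcross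
  · exact absurd (r.fst_mem_support_of_mem_edges hr') hvr
  · rw [← p.dist_add_dist_of_mem_support_s9 hp (p.fst_mem_support_of_mem_edges hp'), dist_comm]
  · exact absurd (q.snd_mem_support_of_mem_edges hq') hwq

namespace IsTree

lemma dist_eq_dist_add_one_of_adj' (hT : G.IsTree) (hvw : G.Adj v w) (x : V) :
    G.dist v x = G.dist w x + 1 ∨ G.dist w x = G.dist v x + 1 := by
  simpa only [dist_comm (u := x)] using hT.dist_eq_dist_add_one_of_adj x hvw

lemma dist_eq_dist_add_dist_of_adj (hT : G.IsTree) (hvw : G.Adj v w)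
    (hx : G.dist v x = G.dist w x + 1) (hy : G.dist w y = G.dist v y + 1) :
    G.dist x y = G.dist v x + G.dist v y :=
  (isAcyclic_iff_forall_adj_isBridge.mp hT.isAcyclic hvw).dist_eq_dist_add_dist hT.connected hx hy

lemma dist_eq_dist_add_one_of_adj_of_ne (hT : G.IsTree) (hvw : G.Adj v w)
    (hx : G.dist v x = G.dist w x + 1) (hxy : G.Adj x y) (hyv : y ≠ v) :
    G.dist v y = G.dist w y + 1 := by
  refine (hT.dist_eq_dist_add_one_of_adj' hvw y).resolve_right fun hy => hyv ?_
  have := hT.dist_eq_dist_add_dist_of_adj hvw hx hy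
  rw [dist_eq_one_iff_adj.mpr hxy] at this
  exact (hT.connected.dist_eq_zero_iff.mp (by omega)).symm

lemma dist_eq_dist_add_one_of_adj_of_adj_of_ne (hT : G.IsTree) (hvw : G.Adj v w)
    (hvw' : G.Adj v w') (hww' : w ≠ w') (hx : G.dist v x = G.dist w x + 1) :
    G.dist w' x = G.dist v x + 1 := by
  refine (hT.dist_eq_dist_add_one_of_adj' hvw' x).resolve_left fun hx' => ?_
  have hw : G.dist w' w = G.dist v w + 1 := by
    refine (hT.dist_eq_dist_add_one_of_adj' hvw' w).resolve_left fun h => hww' ?_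
    rw [dist_eq_one_iff_adj.mpr hvw] at h
    exact (hT.connected.dist_eq_zero_iff.mp (by omega)).symm
  have := hT.dist_eq_dist_add_dist_of_adj hvw' hx' hw
  rw [dist_eq_one_iff_adj.mpr hvw, dist_comm] at this
  omega

end IsTree

end SimpleGraph

open SimpleGraph

section GrowthModel

variable {V : Type*} {T : SimpleGraph V}

def IsGeodesicallyConvex (T : SimpleGraph V) (A : Finset V) : Prop :=
  ∀ a b c, a ∈ A → c ∈ A → T.dist a b + T.dist b c = T.dist a c → b ∈ A

noncomputable def eccIn (T : SimpleGraph V) (A : Finset V) (v : V) : ℕ :=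
  A.sup fun z => T.dist v z

def IsDeepestNeighbor (T : SimpleGraph V) (A : Finset V) (v u₁ : V) : Prop :=
  ∀ w ∈ A, T.Adj v w → w ≠ u₁ → subDepthIn T A v w < subDepthIn T A v u₁

section Static

variable {A : Finset V} {v u₁ w x : V}

lemma dist_le_eccIn (hx : x ∈ A) : T.dist v x ≤ eccIn T A v :=
  le_sup (f := fun z => T.dist v z) hx

lemma eccIn_le {n : ℕ} (h : ∀ x ∈ A, T.dist v x ≤ n) : eccIn T A v ≤ n :=
  Finset.sup_le h

lemma exists_dist_eq_eccIn (hA : A.Nonempty) (v : V) : ∃ x ∈ A, T.dist v x = eccIn T A v := by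
  obtain ⟨x, hx, hxe⟩ := exists_mem_eq_sup A hA fun z => T.dist v z
  exact ⟨x, hx, hxe.symm⟩

lemma dist_le_subDepthIn (hx : x ∈ A) (hxw : T.dist v x = T.dist w x + 1) :
    T.dist v x ≤ subDepthIn T A v w :=
  le_sup (f := fun z => T.dist v z) (mem_filter.mpr ⟨hx, hxw⟩)

lemma subDepthIn_le_eccIn : subDepthIn T A v w ≤ eccIn T A v :=
  sup_mono (filter_subset _ _)

lemma IsGeodesicallyConvex.exists_adj_mem (hT : T.Connected) (hA : IsGeodesicallyConvex T A)
    (hv : v ∈ A) (hx : x ∈ A) (hxv : x ≠ v) :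
    ∃ w ∈ A, T.Adj v w ∧ T.dist v x = T.dist w x + 1 := by
  obtain ⟨w, hvw, hxw⟩ := hT.exists_adj_dist_eq_add_one hxv.symm
  exact ⟨w, hA v w x hv hx (by rw [dist_eq_one_iff_adj.mpr hvw]; omega), hvw, hxw⟩

lemma dist_add_one_le_eccIn_of_isDeepestNeighbor (hT : T.Connected)
    (hA : IsGeodesicallyConvex T A) (hv : v ∈ A) (hu₁ : u₁ ∈ A) (hvu₁ : T.Adj v u₁)
    (hdeep : IsDeepestNeighbor T A v u₁) (hx : x ∈ A) (hxu₁ : T.dist u₁ x = T.dist v x + 1) :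
    T.dist v x + 1 ≤ eccIn T A v := by
  rcases eq_or_ne x v with rfl | hxv
  · simpa [dist_eq_one_iff_adj.mpr hvu₁] using dist_le_eccIn (T := T) (v := x) hu₁
  obtain ⟨w, hw, hvw, hxw⟩ := hA.exists_adj_mem hT hv hx hxv
  have hwu₁ : w ≠ u₁ := by rintro rfl; omega
  calc T.dist v x + 1 ≤ subDepthIn T A v w + 1 := by grw [dist_le_subDepthIn hx hxw]
    _ ≤ subDepthIn T A v u₁ := hdeep w hw hvw hwu₁
    _ ≤ eccIn T A v := subDepthIn_le_eccIn

lemma exists_dist_eq_eccIn_of_isDeepestNeighbor (hT : T.IsTree)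
    (hA : IsGeodesicallyConvex T A) (hv : v ∈ A) (hu₁ : u₁ ∈ A) (hvu₁ : T.Adj v u₁)
    (hdeep : IsDeepestNeighbor T A v u₁) :
    ∃ z ∈ A, T.dist v z = T.dist u₁ z + 1 ∧ T.dist v z = eccIn T A v := by
  obtain ⟨z, hz, hze⟩ := exists_dist_eq_eccIn (T := T) ⟨v, hv⟩ v
  refine ⟨z, hz, (hT.dist_eq_dist_add_one_of_adj' hvu₁ z).resolve_right fun h => ?_, hze⟩
  have := dist_add_one_le_eccIn_of_isDeepestNeighbor hT.connected hA hv hu₁ hvu₁ hdeep hz h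
  omega

lemma exists_dist_add_one_eq_eccIn_of_isDeepestNeighbor (hT : T.IsTree)
    (hA : IsGeodesicallyConvex T A) (hv : v ∈ A) (hu₁ : u₁ ∈ A) (hvu₁ : T.Adj v u₁)
    (hdeep : IsDeepestNeighbor T A v u₁) (hcenter : eccIn T A v ≤ eccIn T A u₁) :
    ∃ z ∈ A, T.dist u₁ z = T.dist v z + 1 ∧ T.dist v z + 1 = eccIn T A v := by
  obtain ⟨z, hz, hze⟩ := exists_dist_eq_eccIn (T := T) ⟨v, hv⟩ u₁
  have := dist_le_eccIn (T := T) (v := v) hz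
  rcases hT.dist_eq_dist_add_one_of_adj' hvu₁ z with h | h
  · omega
  · refine ⟨z, hz, h, le_antisymm ?_ (by omega)⟩
    exact dist_add_one_le_eccIn_of_isDeepestNeighbor hT.connected hA hv hu₁ hvu₁ hdeep hz h

end Static

/-- `S s` is the vertex set of `G_s`; in a tree, geodesic convexity says that `G_s` is a subtree. -/
structure IsICGrowth (T : SimpleGraph V) (u : V) (S : ℕ → Finset V) : Prop where
  zero : S 0 = {u}
  mono : ∀ s, S s ⊆ S (s + 1)
  convex : ∀ s, IsGeodesicallyConvex T (S s)
  adj_root : ∀ x ∈ S 1, x ∉ S 0 → T.Adj u x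
  adj_prev : ∀ s, ∀ x ∈ S (s + 2), x ∉ S (s + 1) → ∃ y ∈ S (s + 1), y ∉ S s ∧ T.Adj x y

namespace IsICGrowth

variable {u v u₁ w x c z₁ z₂ : V} {S : ℕ → Finset V} {s t : ℕ}

lemma monotone (hS : IsICGrowth T u S) : Monotone S :=
  monotone_nat_of_le_succ hS.mono

lemma root_mem (hS : IsICGrowth T u S) : u ∈ S s :=
  hS.monotone s.zero_le (by simp [hS.zero])

lemma exists_adj_of_mem_sdiff (hS : IsICGrowth T u S) (hx : x ∈ S (s + 1)) (hxs : x ∉ S s) :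
    ∃ y ∈ S s, T.Adj x y := by
  cases s with
  | zero => exact ⟨u, by simp [hS.zero], (hS.adj_root x hx hxs).symm⟩
  | succ s =>
    obtain ⟨y, hy, -, hxy⟩ := hS.adj_prev s x hx hxs
    exact ⟨y, hy, hxy⟩

/-- A new vertex closer to the root than its parent would lie on the geodesic from the root to the
parent, hence would not be new. -/
lemma dist_root_eq_of_mem_sdiff (hS : IsICGrowth T u S) (hT : T.IsTree) (hx : x ∈ S (s + 1))
    (hxs : x ∉ S s) : T.dist u x = s + 1 := by
  induction s generalizing x with
  | zero => exact dist_eq_one_iff_adj.mpr (hS.adj_root x hx hxs)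
  | succ s ih =>
    obtain ⟨y, hy, hys, hxy⟩ := hS.adj_prev s x hx hxs
    have := ih hy hys
    have hxy' := dist_eq_one_iff_adj.mpr hxy
    rcases hT.dist_eq_dist_add_one_of_adj u hxy with h | h
    · omega
    · exact absurd (hS.convex (s + 1) u x y hS.root_mem hy (by omega)) hxs

lemma dist_root_le (hS : IsICGrowth T u S) (hT : T.IsTree) (hx : x ∈ S s) : T.dist u x ≤ s := by
  induction s generalizing x with
  | zero => simp_all [hS.zero]
  | succ s ih =>
    by_cases hxs : x ∈ S s
    · exact (ih hxs).trans s.le_succ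
    · exact (hS.dist_root_eq_of_mem_sdiff hT hx hxs).le

lemma eccIn_succ_le (hS : IsICGrowth T u S) (hT : T.Connected) (v : V) :
    eccIn T (S (s + 1)) v ≤ eccIn T (S s) v + 1 := by
  refine eccIn_le fun x hx => ?_
  by_cases hxs : x ∈ S s
  · exact (dist_le_eccIn hxs).trans (Nat.le_succ _)
  · obtain ⟨y, hy, hxy⟩ := hS.exists_adj_of_mem_sdiff hx hxs
    calc T.dist v x ≤ T.dist v y + T.dist y x := hT.dist_triangle
      _ ≤ eccIn T (S s) v + 1 := by grw [dist_le_eccIn hy, dist_eq_one_iff_adj.mpr hxy.symm]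

lemma mem_of_dist_eq_dist_add_one_of_le (hS : IsICGrowth T u S) (hT : T.IsTree) (hv : v ∈ S t)
    (hvw : T.Adj v w) (hdead : ∀ x ∈ S (t + 1), T.dist v x = T.dist w x + 1 → x ∈ S t) :
    ∀ s, t ≤ s → ∀ x ∈ S (s + 1), T.dist v x = T.dist w x + 1 → x ∈ S t := by
  intro s hts
  induction s, hts using Nat.le_induction with
  | base => exact hdead
  | succ s hts ih =>
    intro x hx hxw
    by_contra hxt
    obtain ⟨y, hy, hys, hxy⟩ := hS.adj_prev s x hx fun h => hxt (ih x h hxw)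
    have hyv : y ≠ v := by rintro rfl; exact hys (hS.monotone hts hv)
    exact hys (hS.monotone hts (ih y hy (hT.dist_eq_dist_add_one_of_adj_of_ne hvw hxw hxy hyv)))

lemma eq_of_eccIn_succ_lt (hS : IsICGrowth T u S) (hT : T.IsTree) (hvu₁ : T.Adj v u₁)
    (hz₁ : z₁ ∈ S t) (hz₁u₁ : T.dist v z₁ = T.dist u₁ z₁ + 1)
    (hz₁e : T.dist v z₁ = eccIn T (S t) v) (hz₂ : z₂ ∈ S t)
    (hz₂u₁ : T.dist u₁ z₂ = T.dist v z₂ + 1) (hz₂e : T.dist v z₂ + 1 = eccIn T (S t) v)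
    (hlt : eccIn T (S (t + 1)) c < eccIn T (S (t + 1)) v) : c = u₁ := by
  have := hS.eccIn_succ_le hT.connected v (s := t)
  have hcz₁ := dist_le_eccIn (T := T) (v := c) (hS.mono t hz₁)
  have hcz₂ := dist_le_eccIn (T := T) (v := c) (hS.mono t hz₂)
  have hcu₁ : T.dist v c = T.dist u₁ c + 1 := by
    refine (hT.dist_eq_dist_add_one_of_adj' hvu₁ c).resolve_right fun h => hlt.ne ?_
    have := hT.dist_eq_dist_add_dist_of_adj hvu₁ hz₁u₁ h
    rw [dist_comm] at this
    rw [hT.connected.dist_eq_zero_iff.mp (by omega : T.dist v c = 0)]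
  have := hT.dist_eq_dist_add_dist_of_adj hvu₁ hcu₁ hz₂u₁
  exact (hT.connected.dist_eq_zero_iff.mp (by omega)).symm

lemma exists_mem_sdiff_of_eccIn_succ_lt (hS : IsICGrowth T u S) (hT : T.IsTree)
    (hvu₁ : T.Adj v u₁) (hz₂ : z₂ ∈ S t) (hz₂u₁ : T.dist u₁ z₂ = T.dist v z₂ + 1)
    (hz₂e : T.dist v z₂ + 1 = eccIn T (S t) v)
    (hlt : eccIn T (S (t + 1)) u₁ < eccIn T (S (t + 1)) v) :
    ∃ z ∈ S (t + 1), z ∉ S t ∧ T.dist v z = T.dist u₁ z + 1 ∧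
      T.dist v z = eccIn T (S t) v + 1 := by
  have := hS.eccIn_succ_le hT.connected v (s := t)
  have := dist_le_eccIn (T := T) (v := u₁) (hS.mono t hz₂)
  obtain ⟨z, hz, hze⟩ := exists_dist_eq_eccIn (T := T) ⟨z₂, hS.mono t hz₂⟩ v
  refine ⟨z, hz, fun h => ?_, ?_, by omega⟩
  · have := dist_le_eccIn (T := T) (v := v) h
    omega
  · refine (hT.dist_eq_dist_add_one_of_adj' hvu₁ z).resolve_right fun h => ?_
    have := dist_le_eccIn (T := T) (v := u₁) hz
    omega

lemma dist_root_add_eccIn_le (hS : IsICGrowth T u S) (hT : T.IsTree)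
    (hvu₁ : T.Adj v u₁) (hz₂ : z₂ ∈ S t) (hz₂u₁ : T.dist u₁ z₂ = T.dist v z₂ + 1)
    (hz₂e : T.dist v z₂ + 1 = eccIn T (S t) v)
    (hlt : eccIn T (S (t + 1)) u₁ < eccIn T (S (t + 1)) v) :
    T.dist u v + eccIn T (S t) v ≤ t + 1 := by
  rw [dist_comm]
  rcases hT.dist_eq_dist_add_one_of_adj' hvu₁ u with hu | hu
  · have := hT.dist_eq_dist_add_dist_of_adj hvu₁ hu hz₂u₁
    have := hS.dist_root_le hT hz₂
    omega
  · obtain ⟨z, hz, hzt, hzu₁, hze⟩ :=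
      hS.exists_mem_sdiff_of_eccIn_succ_lt hT hvu₁ hz₂ hz₂u₁ hz₂e hlt
    have := hT.dist_eq_dist_add_dist_of_adj hvu₁ hzu₁ hu
    have := hS.dist_root_eq_of_mem_sdiff hT hz hzt
    rw [dist_comm] at this
    omega

lemma mem_of_eccIn_succ_lt (hS : IsICGrowth T u S) (hT : T.IsTree)
    (hvu₁ : T.Adj v u₁) (hz₂ : z₂ ∈ S t) (hz₂u₁ : T.dist u₁ z₂ = T.dist v z₂ + 1)
    (hz₂e : T.dist v z₂ + 1 = eccIn T (S t) v)
    (hlt : eccIn T (S (t + 1)) u₁ < eccIn T (S (t + 1)) v) (hvw : T.Adj v w) (hwu₁ : w ≠ u₁)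
    (hx : x ∈ S (t + 1)) (hxw : T.dist v x = T.dist w x + 1) : x ∈ S t := by
  by_contra hxt
  have := hT.dist_eq_dist_add_one_of_adj_of_adj_of_ne hvw hvu₁ hwu₁ hxw
  have := hS.eccIn_succ_le hT.connected v (s := t)
  have := dist_le_eccIn (T := T) (v := u₁) hx
  have := hS.dist_root_add_eccIn_le hT hvu₁ hz₂ hz₂u₁ hz₂e hlt
  have := hS.dist_root_eq_of_mem_sdiff hT hx hxt
  have : T.dist u x ≤ T.dist u v + T.dist v x := hT.connected.dist_triangle
  omega

end IsICGrowth

end GrowthModel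

/-- IC-type deterministic growth (vertex sets `S t` of subtrees of an ambient tree `T`,
starting from `{u}`, new vertices attaching only to vertices added at the previous step).
Let `v` be a Jordan center of `G_t`, with unique deepest neighbor subtree at `u1`.
If the Jordan center moves from step `t` to step `t+1`, then every subtree rooted at a
neighbor `w ≠ u1` of `v` is dead at step `t`: it receives no new vertices at step `t+1`
nor at any later step. -/
theorem stmt9 {V : Type*} (T : SimpleGraph V) (hT : T.IsTree)
    (u : V) (S : ℕ → Finset V)
    (h0 : S 0 = {u})
    (hmono : ∀ s, S s ⊆ S (s + 1))
    (hconv : ∀ s, ∀ a b c : V, a ∈ S s → c ∈ S s →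
      T.dist a b + T.dist b c = T.dist a c → b ∈ S s)
    (h1 : ∀ x : V, x ∈ S 1 → x ∉ S 0 → T.Adj u x)
    (hstep : ∀ s, ∀ x : V, x ∈ S (s + 2) → x ∉ S (s + 1) →
      ∃ y : V, y ∈ S (s + 1) ∧ y ∉ S s ∧ T.Adj x y)
    (t : ℕ) (v u1 : V) (hv : v ∈ S t) (hu1 : u1 ∈ S t) (hadj1 : T.Adj v u1)
    (hmin : ∀ w ∈ S t, (S t).sup (fun z => T.dist v z) ≤ (S t).sup (fun z => T.dist w z))
    (hdeepest : ∀ w : V, w ∈ S t → T.Adj v w → w ≠ u1 →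
      subDepthIn T (S t) v w < subDepthIn T (S t) v u1)
    (hmove : ∃ c ∈ S (t + 1), (S (t + 1)).sup (fun z => T.dist c z) <
      (S (t + 1)).sup (fun z => T.dist v z)) :
    ∀ w : V, T.Adj v w → w ≠ u1 →
      ∀ s, t ≤ s → ∀ x ∈ S (s + 1), T.dist v x = T.dist w x + 1 → x ∈ S t := by
  have hS : IsICGrowth T u S := ⟨h0, hmono, hconv, h1, hstep⟩
  obtain ⟨z₁, hz₁, hz₁u₁, hz₁e⟩ :=
    exists_dist_eq_eccIn_of_isDeepestNeighbor hT (hconv t) hv hu1 hadj1 hdeepest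
  obtain ⟨z₂, hz₂, hz₂u₁, hz₂e⟩ :=
    exists_dist_add_one_eq_eccIn_of_isDeepestNeighbor hT (hconv t) hv hu1 hadj1 hdeepest
      (hmin u1 hu1)
  obtain ⟨c, -, hlt⟩ := hmove
  obtain rfl : c = u1 := hS.eq_of_eccIn_succ_lt hT hadj1 hz₁ hz₁u₁ hz₁e hz₂ hz₂u₁ hz₂e hlt
  intro w hvw hwu1
  refine hS.mem_of_dist_eq_dist_add_one_of_le hT hv hvw fun x hx hxw => ?_
  exact hS.mem_of_eccIn_succ_lt hT hadj1 hz₂ hz₂u₁ hz₂e hlt hvw hwu1 hx hxw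
end

section
/- In the IC-type deterministic growth model, if the Jordan center moves from v*_t at step t to v*_{t+1} at step t+1, then the step at which v*_t first appeared in the tree strictly precedes the step at which v*_{t+1} first appeared. Consequently, a vertex that ceases to be the Jordan center can never again become the Jordan center at any later step. -/
/-!
The sets `S s` are the balls of radius `s` about the root `u` in a subtree, so infection time is
depth `dist u ·`. Across an edge `m w` of a tree all distances change by one, and `w` beats `m`
(has smaller eccentricity) as soon as every vertex on `m`'s side is at least two closer to `m`
than the eccentricity of `m`.

If the center moves from `m` (step `t`) to `m'` (step `t + 1`), the eccentricity of `m` grew, so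
its new farthest vertices have depth `t + 1` and lie beyond the neighbour `w` of `m` towards
`m'`. Were `m` not between `u` and `m'`, this `w` would be the parent of `m`, and the depth bound
would make `w` beat `m` already at step `t`. So the center moves strictly deeper.

Once `v` loses the center at step `t₀ + 1`, everything not below the neighbour `w` of `v`
towards the new center lies at depth `< t₀`, hence never grows again, and `w` beats `v` forever.
-/

/-- The infection time of a vertex: the first step at which it appears in the growing tree. -/
noncomputable def infTime {V : Type*} (S : ℕ → Finset V) (v : V) : ℕ :=
  sInf {s : ℕ | v ∈ S s}

theorem mem_infTime {V : Type*} {S : ℕ → Finset V} {x : V} {t : ℕ} (hx : x ∈ S t) :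
    x ∈ S (infTime S x) :=
  Nat.sInf_mem (s := {s | x ∈ S s}) ⟨t, hx⟩

namespace SimpleGraph

variable {V : Type*} {G : SimpleGraph V}

def Between (G : SimpleGraph V) (a b c : V) : Prop :=
  G.dist a b + G.dist b c = G.dist a c

noncomputable def eccOn (G : SimpleGraph V) (A : Finset V) (x : V) : ℕ :=
  A.sup (G.dist x)

def IsCenterOn (G : SimpleGraph V) (A : Finset V) (x : V) : Prop :=
  x ∈ A ∧ ∀ w ∈ A, G.eccOn A x ≤ G.eccOn A w

section Between

variable {a b c x : V}

theorem Between.symm (h : G.Between a b c) : G.Between c b a := by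
  have := G.dist_comm (u := a) (v := b)
  have := G.dist_comm (u := b) (v := c)
  have := G.dist_comm (u := a) (v := c)
  unfold Between at *
  omega

theorem Between.trans_left (hG : G.Connected) (h₁ : G.Between a b c) (h₂ : G.Between a x b) :
    G.Between a x c := by
  have := hG.dist_triangle (u := a) (v := x) (w := c)
  have := hG.dist_triangle (u := x) (v := b) (w := c)
  unfold Between at *
  omega

theorem Between.trans_left_right (hG : G.Connected) (h₁ : G.Between a b c)
    (h₂ : G.Between a x b) : G.Between x b c := by
  have := hG.dist_triangle (u := a) (v := x) (w := c)
  have := hG.dist_triangle (u := x) (v := b) (w := c)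
  unfold Between at *
  omega

theorem Between.trans_right_left (hG : G.Connected) (h₁ : G.Between a b c)
    (h₂ : G.Between b x c) : G.Between a b x := by
  have := hG.dist_triangle (u := a) (v := b) (w := x)
  have := hG.dist_triangle (u := a) (v := x) (w := c)
  unfold Between at *
  omega

theorem Walk.between_of_mem_support (p : G.Walk a c) (hp : p.length = G.dist a c)
    (hb : b ∈ p.support) : G.Between a b c := by
  classical
  have h₁ := G.dist_le (p.takeUntil b hb)
  have h₂ := G.dist_le (p.dropUntil b hb)
  have hsplit := congrArg Walk.length (p.take_spec hb)
  rw [Walk.length_append] at hsplit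
  have := (p.takeUntil b hb).reachable.dist_triangle_left c
  unfold Between
  omega

theorem Reachable.exists_adj_between (h : G.Reachable a c) (hne : a ≠ c) :
    ∃ w, G.Adj a w ∧ G.Between a w c := by
  obtain ⟨p, hp⟩ := h.exists_walk_length_eq_dist
  have hnil : ¬ p.Nil := fun hn => hne hn.eq
  exact ⟨p.snd, p.adj_snd hnil,
    p.between_of_mem_support hp (List.mem_of_mem_tail (p.snd_mem_tail_support hnil))⟩

theorem Reachable.reachable_deleteEdges_of_not_between (h : G.Reachable a c)
    (hb : ¬ G.Between a b c) (y : V) : (G.deleteEdges {s(b, y)}).Reachable a c := by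
  obtain ⟨p, hp⟩ := h.exists_walk_length_eq_dist
  exact (p.toDeleteEdge _ fun he =>
    hb (p.between_of_mem_support hp (p.fst_mem_support_of_mem_edges he))).reachable

end Between

/-- A geodesic from `x` to `z` avoiding `m` would join `m` and `w` without the edge `m w`, which
is a bridge. -/
theorem IsTree.between_of_adj (hT : G.IsTree) {m w x z : V} (hadj : G.Adj m w)
    (hx : G.Between m w x) (hz : ¬ G.Between m w z) : G.Between x m z := by
  by_contra hxz
  have hxw : ¬ G.Between x m w := by
    have := dist_eq_one_iff_adj.mpr hadj
    have := G.dist_comm (u := x) (v := m)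
    have := G.dist_comm (u := x) (v := w)
    unfold Between at *
    omega
  have hzm := (hT.connected z m).reachable_deleteEdges_of_not_between (fun h => hz h.symm) m
  have hxz' := (hT.connected x z).reachable_deleteEdges_of_not_between hxz w
  have hxw' := (hT.connected x w).reachable_deleteEdges_of_not_between hxw w
  rw [Sym2.eq_swap] at hzm
  exact isAcyclic_iff_forall_adj_isBridge.mp hT.isAcyclic hadj
    ((hzm.symm.trans hxz'.symm).trans hxw')

theorem IsTree.between_iff_between_of_adj (hT : G.IsTree) {u v w z : V} (hadj : G.Adj v w)
    (huvw : G.Between u v w) : G.Between v w z ↔ G.Between u w z := by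
  have hvw := dist_eq_one_iff_adj.mpr hadj
  refine ⟨fun hvwz => ?_, fun huwz => huwz.trans_left_right hT.connected huvw⟩
  have hvwu : ¬ G.Between v w u := by
    have := G.dist_comm (u := v) (v := u)
    have := G.dist_comm (u := w) (v := u)
    unfold Between at *
    omega
  have hzvu := hT.between_of_adj hadj hvwz hvwu
  have := G.dist_comm (u := z) (v := v)
  have := G.dist_comm (u := z) (v := u)
  have := G.dist_comm (u := v) (v := u)
  unfold Between at *
  omega

section eccOn

variable {A B : Finset V} {x z : V}

theorem dist_le_eccOn (hz : z ∈ A) : G.dist x z ≤ G.eccOn A x :=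
  Finset.le_sup (f := G.dist x) hz

theorem exists_dist_eq_eccOn (hA : A.Nonempty) (x : V) : ∃ z ∈ A, G.dist x z = G.eccOn A x := by
  obtain ⟨z, hz, h⟩ := Finset.exists_mem_eq_sup A hA (G.dist x)
  exact ⟨z, hz, h.symm⟩

theorem eccOn_mono (h : A ⊆ B) : G.eccOn A x ≤ G.eccOn B x :=
  Finset.sup_mono h

theorem eccOn_le_iff {n : ℕ} : G.eccOn A x ≤ n ↔ ∀ z ∈ A, G.dist x z ≤ n :=
  Finset.sup_le_iff

theorem Connected.eccOn_lt_of_adj (hG : G.Connected) (hA : A.Nonempty) {m w : V}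
    (hadj : G.Adj m w) (hfar : ∀ z ∈ A, ¬ G.Between m w z → G.dist m z + 2 ≤ G.eccOn A m) :
    G.eccOn A w < G.eccOn A m := by
  obtain ⟨z, hz, hze⟩ := exists_dist_eq_eccOn hA w
  have hmw := dist_eq_one_iff_adj.mpr hadj
  have := dist_le_eccOn (G := G) (x := m) hz
  rw [← hze]
  by_cases hside : G.Between m w z
  · unfold Between at hside
    omega
  · have := hfar z hz hside
    have := hG.dist_triangle (u := w) (v := m) (w := z)
    rw [G.dist_comm] at hmw
    omega

theorem IsTree.dist_add_two_le_eccOn (hT : G.IsTree) {m w m' : V} (hadj : G.Adj m w)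
    (hm' : G.Between m w m') (hlt : G.eccOn A m' < G.eccOn A m) (hz : z ∈ A)
    (hzw : ¬ G.Between m w z) : G.dist m z + 2 ≤ G.eccOn A m := by
  have hm'mz := hT.between_of_adj hadj hm' hzw
  have := dist_le_eccOn (G := G) (x := m') hz
  have := dist_eq_one_iff_adj.mpr hadj
  have := G.dist_comm (u := m') (v := m)
  unfold Between at *
  omega

end eccOn

structure IsICGrowth (T : SimpleGraph V) (u : V) (S : ℕ → Finset V) : Prop where
  zero : S 0 = {u}
  mono : ∀ s, S s ⊆ S (s + 1)
  convex : ∀ s a b c, a ∈ S s → c ∈ S s → T.Between a b c → b ∈ S s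
  adj_one : ∀ x, x ∈ S 1 → x ∉ S 0 → T.Adj u x
  adj_step : ∀ s x, x ∈ S (s + 2) → x ∉ S (s + 1) →
    ∃ y, y ∈ S (s + 1) ∧ y ∉ S s ∧ T.Adj x y

namespace IsICGrowth

variable {T : SimpleGraph V} {u : V} {S : ℕ → Finset V} (hS : IsICGrowth T u S)
include hS

theorem monotone : Monotone S :=
  monotone_nat_of_le_succ hS.mono

theorem root_mem (s : ℕ) : u ∈ S s :=
  hS.monotone (Nat.zero_le s) (by simp [hS.zero])

theorem exists_adj_of_notMem {s : ℕ} {x : V} (hx : x ∈ S (s + 1)) (hxs : x ∉ S s) :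
    ∃ y ∈ S s, T.Adj x y := by
  cases s with
  | zero => exact ⟨u, by simp [hS.zero], (hS.adj_one x hx hxs).symm⟩
  | succ s =>
    obtain ⟨y, hy, -, hadj⟩ := hS.adj_step s x hx hxs
    exact ⟨y, hy, hadj⟩

theorem dist_root_le (s : ℕ) : ∀ x ∈ S s, T.dist u x ≤ s := by
  induction s with
  | zero => intro x hx; simp_all [hS.zero]
  | succ s ih =>
    intro x hx
    by_cases hxs : x ∈ S s
    · exact (ih x hxs).trans s.le_succ
    · obtain ⟨y, hy, hadj⟩ := hS.exists_adj_of_notMem hx hxs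
      have := hadj.symm.reachable.dist_triangle_right u
      have := ih y hy
      rw [dist_eq_one_iff_adj.mpr hadj.symm] at *
      omega

theorem dist_root_eq_of_notMem (hT : T.IsTree) (s : ℕ) :
    ∀ x ∈ S (s + 1), x ∉ S s → T.dist u x = s + 1 := by
  induction s with
  | zero => exact fun x hx hxs => dist_eq_one_iff_adj.mpr (hS.adj_one x hx hxs)
  | succ s ih =>
    intro x hx hxs
    obtain ⟨y, hy, hys, hadj⟩ := hS.adj_step s x hx hxs
    have hdy := ih y hy hys
    rcases hT.dist_eq_dist_add_one_of_adj u hadj with h | h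
    · omega
    · refine absurd (hS.convex (s + 1) u x y (hS.root_mem _) hy ?_) hxs
      rw [Between, dist_eq_one_iff_adj.mpr hadj]
      omega

theorem mem_of_dist_root_le (hT : T.IsTree) {s t : ℕ} {x : V} (hx : x ∈ S t)
    (hxs : T.dist u x ≤ s) : x ∈ S s := by
  have hmem := mem_infTime hx
  by_cases hle : infTime S x ≤ s
  · exact hS.monotone hle hmem
  obtain ⟨k, hk⟩ : ∃ k, infTime S x = k + 1 := Nat.exists_eq_add_one.mpr (by omega)
  have hxk : x ∉ S k :=
    Nat.notMem_of_lt_sInf (s := {s | x ∈ S s}) (by unfold infTime at hk; omega)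
  rw [hk] at hmem
  have := hS.dist_root_eq_of_notMem hT k x hmem hxk
  omega

theorem infTime_eq_dist (hT : T.IsTree) {t : ℕ} {x : V} (hx : x ∈ S t) :
    infTime S x = T.dist u x :=
  le_antisymm (Nat.sInf_le (hS.mem_of_dist_root_le hT hx le_rfl))
    (hS.dist_root_le _ x (mem_infTime hx))

theorem eccOn_succ_le (s : ℕ) (x : V) : T.eccOn (S (s + 1)) x ≤ T.eccOn (S s) x + 1 := by
  refine eccOn_le_iff.mpr fun z hz => ?_
  by_cases hzs : z ∈ S s
  · exact (dist_le_eccOn hzs).trans (Nat.le_succ _)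
  · obtain ⟨y, hy, hadj⟩ := hS.exists_adj_of_notMem hz hzs
    have := hadj.symm.reachable.dist_triangle_right x
    have := dist_le_eccOn (G := T) (x := x) hy
    rw [dist_eq_one_iff_adj.mpr hadj.symm] at *
    omega

theorem between_of_dist_root_eq (hconn : T.Connected) {s t : ℕ} {w : V}
    (hs : ∀ z ∈ S s, T.dist u z = s → T.Between u w z) (hst : s ≤ t) :
    ∀ z ∈ S t, T.dist u z = t → T.Between u w z := by
  induction hst with
  | refl => exact hs
  | @step t _ ih =>
    intro z hz hdz
    have hzt : z ∉ S t := fun h => by have := hS.dist_root_le t z h; omega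
    obtain ⟨y, hy, hadj⟩ := hS.exists_adj_of_notMem hz hzt
    have := hadj.symm.reachable.dist_triangle_right u
    have := hS.dist_root_le t y hy
    have hyz : T.dist y z = 1 := dist_eq_one_iff_adj.mpr hadj.symm
    have hdy : T.dist u y = t := by omega
    have huyz : T.Between u y z := by unfold Between; omega
    exact huyz.trans_left hconn (ih y hy hdy)

theorem mem_of_not_between (hT : T.IsTree) {s t : ℕ} {w z : V}
    (hs : ∀ z ∈ S s, T.dist u z = s → T.Between u w z) (hz : z ∈ S t)
    (hzw : ¬ T.Between u w z) : z ∈ S s := by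
  refine hS.mem_of_dist_root_le hT hz (not_lt.mp fun hlt => hzw ?_)
  exact hS.between_of_dist_root_eq hT.connected hs hlt.le z
    (hS.mem_of_dist_root_le hT hz le_rfl) rfl

theorem eccOn_succ_eq_of_isCenterOn (hT : T.IsTree) {t : ℕ} {m m' : V}
    (hm : T.IsCenterOn (S t) m) (hm' : m' ∈ S (t + 1))
    (hlt : T.eccOn (S (t + 1)) m' < T.eccOn (S (t + 1)) m) :
    T.eccOn (S (t + 1)) m = T.eccOn (S t) m + 1 := by
  suffices T.eccOn (S t) m < T.eccOn (S (t + 1)) m by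
    have := hS.eccOn_succ_le t m
    omega
  by_cases hm't : m' ∈ S t
  · calc T.eccOn (S t) m ≤ T.eccOn (S t) m' := hm.2 m' hm't
      _ ≤ T.eccOn (S (t + 1)) m' := eccOn_mono (hS.mono t)
      _ < T.eccOn (S (t + 1)) m := hlt
  · -- `m'` is new, so it has depth `t + 1`, while the root has eccentricity at most `t`
    have := hS.dist_root_eq_of_notMem hT t m' hm' hm't
    have := hm.2 u (hS.root_mem t)
    have := eccOn_le_iff.mpr (hS.dist_root_le t)
    have := dist_le_eccOn (G := T) (x := m') (hS.root_mem (t + 1))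
    rw [T.dist_comm] at this
    omega

theorem between_of_isCenterOn (hT : T.IsTree) {t : ℕ} {m m' : V}
    (hm : T.IsCenterOn (S t) m) (hm' : m' ∈ S (t + 1))
    (hlt : T.eccOn (S (t + 1)) m' < T.eccOn (S (t + 1)) m) : T.Between u m m' := by
  have hsucc := hS.eccOn_succ_eq_of_isCenterOn hT hm hm' hlt
  obtain ⟨z₀, hz₀, hz₀e⟩ := exists_dist_eq_eccOn (G := T) ⟨u, hS.root_mem (t + 1)⟩ m
  have hz₀t : z₀ ∉ S t := fun h => by have := dist_le_eccOn (G := T) (x := m) h; omega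
  have hdz₀ := hS.dist_root_eq_of_notMem hT t z₀ hz₀ hz₀t
  by_contra hum
  obtain ⟨w, hadj, hw⟩ := (hT.connected m m').exists_adj_between (ne_of_apply_ne _ hlt.ne')
  have hmw := dist_eq_one_iff_adj.mpr hadj
  have hwu : T.Between m w u := by
    by_contra h
    exact hum (hT.between_of_adj hadj hw h).symm
  have hz₀w : T.Between m w z₀ := by
    by_contra h
    have := hT.dist_add_two_le_eccOn hadj hw hlt hz₀ h
    omega
  have hdepth : t + 2 ≤ T.dist u m + T.eccOn (S t) m := by
    have := hT.connected.dist_triangle (u := u) (v := w) (w := z₀)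
    have huwm := hwu.symm
    have := T.dist_comm (u := w) (v := m)
    unfold Between at huwm hz₀w
    omega
  refine (hm.2 w (hS.convex t m w u hm.1 (hS.root_mem t) hwu)).not_gt
    (hT.connected.eccOn_lt_of_adj ⟨u, hS.root_mem t⟩ hadj fun z hz hzw => ?_)
  have humz := hT.between_of_adj hadj hwu hzw
  have := hS.dist_root_le t z hz
  unfold Between at humz
  omega

theorem dist_root_lt_of_isCenterOn (hT : T.IsTree) {t : ℕ} {m m' : V}
    (hm : T.IsCenterOn (S t) m) (hm' : m' ∈ S (t + 1))
    (hlt : T.eccOn (S (t + 1)) m' < T.eccOn (S (t + 1)) m) : T.dist u m < T.dist u m' := by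
  have hum' := hS.between_of_isCenterOn hT hm hm' hlt
  have := hT.connected.pos_dist_of_ne (ne_of_apply_ne _ hlt.ne')
  unfold Between at hum'
  omega

theorem not_isCenterOn_of_eccOn_lt (hT : T.IsTree) {t₀ t : ℕ} {v c : V}
    (hv : T.IsCenterOn (S t₀) v) (hc : c ∈ S (t₀ + 1))
    (hlt : T.eccOn (S (t₀ + 1)) c < T.eccOn (S (t₀ + 1)) v) (ht : t₀ + 1 ≤ t) :
    ¬ T.IsCenterOn (S t) v := by
  have hvc := hS.between_of_isCenterOn hT hv hc hlt
  obtain ⟨w, hadj, hwc⟩ := (hT.connected v c).exists_adj_between (ne_of_apply_ne _ hlt.ne')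
  have huvw : T.Between u v w := hvc.trans_right_left hT.connected hwc
  have hside := fun z => hT.between_iff_between_of_adj (z := z) hadj huvw
  have hfar : ∀ z ∈ S (t₀ + 1), ¬ T.Between u w z →
      T.dist v z + 2 ≤ T.eccOn (S (t₀ + 1)) v := fun z hz hzw =>
    hT.dist_add_two_le_eccOn hadj hwc hlt hz (mt (hside z).1 hzw)
  have hecc : T.dist u v + T.eccOn (S (t₀ + 1)) v ≤ t₀ + 1 := by
    obtain ⟨z, hz, hze⟩ := exists_dist_eq_eccOn (G := T) ⟨u, hS.root_mem (t₀ + 1)⟩ v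
    have huwz : T.Between u w z := by
      by_contra h
      have := hfar z hz h
      omega
    have := hS.dist_root_le _ z hz
    have := hT.connected.dist_triangle (u := v) (v := w) (w := z)
    unfold Between at huvw huwz
    omega
  have hdead : ∀ z ∈ S t, ¬ T.Between u w z → z ∈ S (t₀ + 1) := by
    refine fun z hz hzw => hS.mem_of_not_between hT (fun z hz hdz => ?_) hz hzw
    by_contra hzw
    have := hfar z hz hzw
    have := hT.connected.dist_triangle (u := u) (v := v) (w := z)
    omega
  rintro ⟨hvt, hmin⟩
  have hwt : w ∈ S t := hS.convex t v w c hvt (hS.monotone ht hc) hwc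
  refine (hmin w hwt).not_gt (hT.connected.eccOn_lt_of_adj ⟨v, hvt⟩ hadj fun z hz hzw => ?_)
  have hzw' := mt (hside z).2 hzw
  have := hfar z (hdead z hz hzw') hzw'
  have := eccOn_mono (G := T) (x := v) (hS.monotone ht)
  omega

end IsICGrowth

end SimpleGraph

/-- IC-type deterministic growth (vertex sets `S t` of subtrees of an ambient tree `T`,
starting from `{u}`, new vertices attaching only to vertices added at the previous step).
(1) If the Jordan center moves from `vt` at step `t` to `vt1` at step `t+1`, then the step at
which `vt` first appeared strictly precedes that of `vt1`.
(2) Consequently, a vertex `v` that was the Jordan center at step `t0` but ceased to be at step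
`t0+1` is never again a Jordan center at any later step. -/
theorem stmt10 {V : Type*} (T : SimpleGraph V) (hT : T.IsTree)
    (u : V) (S : ℕ → Finset V)
    (h0 : S 0 = {u})
    (hmono : ∀ s, S s ⊆ S (s + 1))
    (hconv : ∀ s, ∀ a b c : V, a ∈ S s → c ∈ S s →
      T.dist a b + T.dist b c = T.dist a c → b ∈ S s)
    (h1 : ∀ x : V, x ∈ S 1 → x ∉ S 0 → T.Adj u x)
    (hstep : ∀ s, ∀ x : V, x ∈ S (s + 2) → x ∉ S (s + 1) →
      ∃ y : V, y ∈ S (s + 1) ∧ y ∉ S s ∧ T.Adj x y) :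
    (∀ t (vt vt1 : V), vt ∈ S t →
      (∀ w ∈ S t, (S t).sup (fun z => T.dist vt z) ≤ (S t).sup (fun z => T.dist w z)) →
      vt1 ∈ S (t + 1) →
      (∀ w ∈ S (t + 1),
        (S (t + 1)).sup (fun z => T.dist vt1 z) ≤ (S (t + 1)).sup (fun z => T.dist w z)) →
      (S (t + 1)).sup (fun z => T.dist vt1 z) < (S (t + 1)).sup (fun z => T.dist vt z) →
      infTime S vt < infTime S vt1) ∧
    (∀ t0 (v : V), v ∈ S t0 →
      (∀ w ∈ S t0, (S t0).sup (fun z => T.dist v z) ≤ (S t0).sup (fun z => T.dist w z)) →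
      (∃ c ∈ S (t0 + 1), (S (t0 + 1)).sup (fun z => T.dist c z) <
        (S (t0 + 1)).sup (fun z => T.dist v z)) →
      ∀ t, t0 + 1 ≤ t →
        ¬ (∀ w ∈ S t, (S t).sup (fun z => T.dist v z) ≤ (S t).sup (fun z => T.dist w z))) := by
  have hS : T.IsICGrowth u S := ⟨h0, hmono, hconv, h1, hstep⟩
  refine ⟨fun t vt vt1 hvt hmin hvt1 _ hlt => ?_, fun t0 v hv hmin ⟨c, hc, hlt⟩ t ht hcenter => ?_⟩
  · rw [hS.infTime_eq_dist hT hvt, hS.infTime_eq_dist hT hvt1]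
    exact hS.dist_root_lt_of_isCenterOn hT ⟨hvt, hmin⟩ hvt1 hlt
  · exact hS.not_isCenterOn_of_eccOn_lt hT ⟨hv, hmin⟩ hc hlt ht
      ⟨hS.monotone (by omega) hv, hcenter⟩
end
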